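/- arXiv:1810.11916 — 8 statements merged into one kernel-verified Lean document; each statement's English description precedes it below -/
import Mathlib

section
/- Let w ∈ S_n be a permutation containing a 132 pattern, let p be the largest index t such that there exist i < t < j with w(i) < w(j) < w(t), and let q be the largest index j > p such that w(j) < w(p) and there exists i < p with w(i) < w(j). Then w(q) is the largest value among all values w(j) with j > p and w(j) < w(p). -/
theorem stmt_1 {n : ℕ} (w : Equiv.Perm (Fin n)) (p q : Fin n)
    (hp : ∃ i j : Fin n, i < p ∧ p < j ∧ w i < w j ∧ w j < w p)
    (hpmax : ∀ t : Fin n, (∃ i j : Fin n, i < t ∧ t < j ∧ w i < w j ∧ w j < w t) → t ≤ p)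
    (hq : p < q ∧ w q < w p ∧ ∃ i : Fin n, i < p ∧ w i < w q)
    (hqmax : ∀ j : Fin n, p < j → w j < w p → (∃ i : Fin n, i < p ∧ w i < w j) → j ≤ q) :
    ∀ j : Fin n, p < j → w j < w p → w j ≤ w q := by
  intro j hj hjp
  by_contra h
  push_neg at h
  obtain ⟨hpq, hwq, i, hip, hiq⟩ := hq
  have hij : w i < w j := lt_trans hiq h
  have hjq : j ≤ q := hqmax j hj hjp ⟨i, hip, hij⟩
  have hjq' : j < q := lt_of_le_of_ne hjq (by rintro rfl; exact lt_irrefl _ h)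
  have : j ≤ p := hpmax j ⟨i, q, lt_trans hip hj, hjq', hiq, h⟩
  exact absurd hj (not_lt.mpr this)
end

section
/- Let w ∈ S_n contain a 132 pattern, and let p, q be as defined: p is the largest index t such that there exist i < t < j with w(i) < w(j) < w(t), and q is the largest index j > p with w(j) < w(p) and ∃ i < p, w(i) < w(j). Then ℓ(w t_{p,q}) = ℓ(w) − 1, where t_{p,q} is the transposition of positions p and q and ℓ denotes the number of inversions. -/
/-!
Swapping the entries in positions `p < q` of `w` with `w q < w p` changes the inversion set as
follows: a pair whose order is kept by the transposition `σ = (p q)` corresponds to its image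
under `σ`, and `σ` reverses only `(p, q)` and the pairs `(p, r)`, `(r, q)` with `p < r < q`. Since
no such `r` has `w r` between `w q` and `w p`, each of these pairs except `(p, q)` is an inversion
of `w` exactly when it is one of `w σ`. So `w` has precisely one more inversion, namely `(p, q)`.
The maximality of `p` rules out such an `r`: `(i, r, q)` would be a `132` pattern.
-/

/-- The number of inversions of a permutation of `Fin n`. -/
def numInv {n : ℕ} (w : Equiv.Perm (Fin n)) : ℕ :=
  (Finset.univ.filter (fun x : Fin n × Fin n => x.1 < x.2 ∧ w x.2 < w x.1)).card

namespace Equiv.Perm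

variable {α : Type*} [LinearOrder α]

def inversions [Fintype α] (w : Perm α) : Finset (α × α) :=
  {x | x.1 < x.2 ∧ w x.2 < w x.1}

theorem mem_inversions [Fintype α] {w : Perm α} {x : α × α} :
    x ∈ inversions w ↔ x.1 < x.2 ∧ w x.2 < w x.1 := by
  simp [inversions]

theorem numInv_eq_card_inversions {n : ℕ} (w : Perm (Fin n)) :
    numInv w = (inversions w).card :=
  rfl

theorem eq_of_swap_apply_lt_swap_apply {p q a b : α} (hpq : p < q) (hab : a < b)
    (h : swap p q b < swap p q a) : (a = p ∧ b ≤ q) ∨ (p ≤ a ∧ b = q) := by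
  simp only [swap_apply_def] at h
  split_ifs at h <;> subst_vars <;> grind

def relabelPair (σ : Perm α) (x : α × α) : α × α :=
  if σ x.1 < σ x.2 then (σ x.1, σ x.2) else x

theorem relabelPair_fst_lt_snd (σ : Perm α) {x : α × α} (hx : x.1 < x.2) :
    (relabelPair σ x).1 < (relabelPair σ x).2 := by
  unfold relabelPair
  split_ifs with h
  exacts [h, hx]

theorem relabelPair_relabelPair {σ : Perm α} (hσ : Function.Involutive σ) {x : α × α}
    (hx : x.1 < x.2) : relabelPair σ (relabelPair σ x) = x := by
  by_cases h : σ x.1 < σ x.2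
  · simp [relabelPair, h, hσ x.1, hσ x.2, hx]
  · simp [relabelPair, h]

section AdjacentValues

variable {w : Perm α} {p q : α} (hpq : p < q) (hw : w q < w p)
  (hmid : ∀ r, p < r → r < q → w q < w r → w r < w p → False)
include hpq hw hmid

theorem mul_swap_apply_lt_iff_of_swap_apply_lt {a b : α} (hab : a < b)
    (hrev : swap p q b < swap p q a) (hne : (a, b) ≠ (p, q)) :
    (w * swap p q) b < (w * swap p q) a ↔ w b < w a := by
  rcases eq_of_swap_apply_lt_swap_apply hpq hab hrev with ⟨rfl, hb⟩ | ⟨ha, rfl⟩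
  · have hbq : b < q := lt_of_le_of_ne hb (by rintro rfl; exact hne rfl)
    rw [mul_apply, mul_apply, swap_apply_left, swap_apply_of_ne_of_ne hab.ne' hbq.ne]
    refine ⟨fun h => h.trans hw, fun h => lt_of_not_ge fun h' => ?_⟩
    exact hmid b hab hbq (lt_of_le_of_ne h' (w.injective.ne hbq.ne')) h
  · have hpa : p < a := lt_of_le_of_ne ha (by rintro rfl; exact hne rfl)
    rw [mul_apply, mul_apply, swap_apply_right, swap_apply_of_ne_of_ne hpa.ne' hab.ne]
    refine ⟨fun h => hw.trans h, fun h => lt_of_not_ge fun h' => ?_⟩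
    exact hmid a hpa hab h (lt_of_le_of_ne h' (w.injective.ne hpa.ne'))

theorem relabelPair_mem_inversions_mul_swap_iff [Fintype α] {x : α × α} (hx : x.1 < x.2) :
    relabelPair (swap p q) x ∈ inversions (w * swap p q) ↔ x ∈ inversions w ∧ x ≠ (p, q) := by
  by_cases h : swap p q x.1 < swap p q x.2
  · have hx_ne : x ≠ (p, q) := by
      rintro rfl
      simp only [swap_apply_left, swap_apply_right] at h
      exact h.not_gt hpq
    simp [relabelPair, h, mem_inversions, mul_apply, hx, hx_ne]
  · simp only [relabelPair, if_neg h, mem_inversions]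
    by_cases hx_eq : x = (p, q)
    · subst hx_eq
      simp [mul_apply, hw.not_gt]
    · rw [mul_swap_apply_lt_iff_of_swap_apply_lt hpq hw hmid hx (not_lt.1 h |>.lt_of_ne ?_) hx_eq]
      · simp [hx, hx_eq]
      · exact (swap p q).injective.ne hx.ne'

theorem card_inversions_mul_swap_add_one [Fintype α] :
    (inversions (w * swap p q)).card + 1 = (inversions w).card := by
  have hpq_mem : (p, q) ∈ inversions w := mem_inversions.2 ⟨hpq, hw⟩
  have hσ : Function.Involutive (swap p q) := swap_apply_self p q
  rw [← Finset.card_erase_add_one hpq_mem, Finset.card_nbij' (relabelPair (swap p q))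
    (relabelPair (swap p q)) ?_ ?_ ?_ ?_]
  · intro y hy
    have hy_lt := (mem_inversions.1 hy).1
    rw [Finset.mem_coe, Finset.mem_erase, and_comm]
    refine (relabelPair_mem_inversions_mul_swap_iff hpq hw hmid
      (relabelPair_fst_lt_snd _ hy_lt)).1 ?_
    rwa [relabelPair_relabelPair hσ hy_lt]
  · intro x hx
    rw [Finset.mem_coe, Finset.mem_erase] at hx
    exact (relabelPair_mem_inversions_mul_swap_iff hpq hw hmid (mem_inversions.1 hx.2).1).2
      ⟨hx.2, hx.1⟩
  · intro y hy
    exact relabelPair_relabelPair hσ (mem_inversions.1 hy).1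
  · intro x hx
    exact relabelPair_relabelPair hσ (mem_inversions.1 (Finset.mem_of_mem_erase hx)).1

end AdjacentValues

end Equiv.Perm

theorem stmt_2_general {n : ℕ} (w : Equiv.Perm (Fin n)) (p q : Fin n)
    (hpmax : ∀ t : Fin n, (∃ i j : Fin n, i < t ∧ t < j ∧ w i < w j ∧ w j < w t) → t ≤ p)
    (hq : p < q ∧ w q < w p ∧ ∃ i : Fin n, i < p ∧ w i < w q) :
    numInv (w * Equiv.swap p q) + 1 = numInv w := by
  obtain ⟨hpq, hw, i, hip, hiq⟩ := hq
  rw [Equiv.Perm.numInv_eq_card_inversions, Equiv.Perm.numInv_eq_card_inversions]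
  refine Equiv.Perm.card_inversions_mul_swap_add_one hpq hw fun r hpr hrq hqr hrp => ?_
  exact (hpmax r ⟨i, q, hip.trans hpr, hrq, hiq, hqr⟩).not_gt hpr

theorem stmt_2 {n : ℕ} (w : Equiv.Perm (Fin n)) (p q : Fin n)
    (hp : ∃ i j : Fin n, i < p ∧ p < j ∧ w i < w j ∧ w j < w p)
    (hpmax : ∀ t : Fin n, (∃ i j : Fin n, i < t ∧ t < j ∧ w i < w j ∧ w j < w t) → t ≤ p)
    (hq : p < q ∧ w q < w p ∧ ∃ i : Fin n, i < p ∧ w i < w q)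
    (hqmax : ∀ j : Fin n, p < j → w j < w p → (∃ i : Fin n, i < p ∧ w i < w j) → j ≤ q) :
    numInv (w * Equiv.swap p q) + 1 = numInv w :=
  stmt_2_general w p q hpmax hq
end

section
/- Let w ∈ S_n contain a 132 pattern, with p the largest index t admitting i < t < j with w(i) < w(j) < w(t), and q the largest index j > p with w(j) < w(p) and ∃ i < p, w(i) < w(j). Set u = w t_{p,q}. Then the set Ψ(u,p) = { u t_{p,j} : j > p, ℓ(u t_{p,j}) = ℓ(u) + 1 } equals the singleton {w}. -/
open Finset Equiv

lemma swap_reversed_iff {n : ℕ} {p j : Fin n} (hpj : p < j) (x1 x2 : Fin n) :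
    (x1 < x2 ∧ Equiv.swap p j x2 < Equiv.swap p j x1) ↔
      ((x1 = p ∧ p < x2 ∧ x2 < j) ∨ (x2 = j ∧ p < x1 ∧ x1 < j) ∨ (x1 = p ∧ x2 = j)) := by
  simp only [Equiv.swap_apply_def]
  split_ifs <;> fin_omega

lemma key {n : ℕ} (u : Equiv.Perm (Fin n)) (p j : Fin n) (hpj : p < j) (h : u p < u j) :
    numInv (u * Equiv.swap p j) =
      numInv u + 1 + 2 * (Finset.univ.filter
        (fun k : Fin n => p < k ∧ k < j ∧ u p < u k ∧ u k < u j)).card := by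
  set σ := Equiv.swap p j with hσ
  -- Step A
  have hA : numInv (u * σ) = (Finset.univ.filter
      (fun x : Fin n × Fin n => σ x.1 < σ x.2 ∧ u x.2 < u x.1)).card := by
    unfold numInv
    have hss : ∀ a, σ (σ a) = a := fun a => Equiv.swap_apply_self p j a
    apply Finset.card_bij' (fun x _ => (σ x.1, σ x.2)) (fun x _ => (σ x.1, σ x.2)) <;>
      intro x hx <;>
      simp_all [Equiv.Perm.mul_apply, hss, Prod.ext_iff]
  -- splitting
  have hsplitB := Finset.card_filter_add_card_filter_not
    (s := Finset.univ.filter (fun x : Fin n × Fin n => σ x.1 < σ x.2 ∧ u x.2 < u x.1))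
    (fun x : Fin n × Fin n => x.1 < x.2)
  have hsplitA := Finset.card_filter_add_card_filter_not
    (s := Finset.univ.filter (fun x : Fin n × Fin n => x.1 < x.2 ∧ u x.2 < u x.1))
    (fun x : Fin n × Fin n => σ x.1 < σ x.2)
  rw [Finset.filter_filter] at hsplitA hsplitB
  rw [Finset.filter_filter] at hsplitA hsplitB
  -- names
  set S1p := Finset.univ.filter
      (fun x : Fin n × Fin n => x.1 < x.2 ∧ σ x.1 < σ x.2 ∧ u x.2 < u x.1) with hS1p
  set R1 := Finset.univ.filter
      (fun x : Fin n × Fin n => x.1 < x.2 ∧ σ x.2 < σ x.1 ∧ u x.2 < u x.1) with hR1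
  set R2 := Finset.univ.filter
      (fun x : Fin n × Fin n => x.1 < x.2 ∧ σ x.2 < σ x.1 ∧ u x.1 < u x.2) with hR2
  have e1 : Finset.univ.filter
      (fun x : Fin n × Fin n => (σ x.1 < σ x.2 ∧ u x.2 < u x.1) ∧ x.1 < x.2) = S1p := by
    ext x; simp only [hS1p, Finset.mem_filter]; tauto
  have e2 : Finset.univ.filter
      (fun x : Fin n × Fin n => (x.1 < x.2 ∧ u x.2 < u x.1) ∧ σ x.1 < σ x.2) = S1p := by
    ext x; simp only [hS1p, Finset.mem_filter]; tauto
  have e3 : Finset.univ.filter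
      (fun x : Fin n × Fin n => (x.1 < x.2 ∧ u x.2 < u x.1) ∧ ¬ σ x.1 < σ x.2) = R1 := by
    ext x
    simp only [hR1, Finset.mem_filter, Finset.mem_univ, true_and]
    constructor
    · rintro ⟨⟨h1, h2⟩, h3⟩
      have hne : σ x.1 ≠ σ x.2 := σ.injective.ne (ne_of_lt h1)
      exact ⟨h1, lt_of_le_of_ne (not_lt.mp h3) hne.symm, h2⟩
    · rintro ⟨h1, h2, h3⟩; exact ⟨⟨h1, h3⟩, not_lt.mpr h2.le⟩
  have e4 : (Finset.univ.filter
      (fun x : Fin n × Fin n => (σ x.1 < σ x.2 ∧ u x.2 < u x.1) ∧ ¬ x.1 < x.2)).card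
      = R2.card := by
    apply Finset.card_bij' (fun x _ => (x.2, x.1)) (fun x _ => (x.2, x.1)) <;>
      intro x hx <;>
      simp only [hR2, Finset.mem_filter, Finset.mem_univ, true_and] at hx ⊢
    · obtain ⟨⟨h1, h2⟩, h3⟩ := hx
      have hne : x.1 ≠ x.2 := fun he => by rw [he] at h1; exact lt_irrefl _ h1
      exact ⟨lt_of_le_of_ne (not_lt.mp h3) hne.symm, h1, h2⟩
    · obtain ⟨h1, h2, h3⟩ := hx
      exact ⟨⟨h2, h3⟩, not_lt.mpr h1.le⟩
  set T1 := Finset.univ.filter (fun k : Fin n => p < k ∧ k < j ∧ u k < u p) with hT1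
  set T3 := Finset.univ.filter (fun k : Fin n => p < k ∧ k < j ∧ u j < u k) with hT3
  set T2a := Finset.univ.filter (fun k : Fin n => p < k ∧ k < j ∧ u p < u k) with hT2a
  set T2b := Finset.univ.filter (fun k : Fin n => p < k ∧ k < j ∧ u k < u j) with hT2b
  set K := Finset.univ.filter
      (fun k : Fin n => p < k ∧ k < j ∧ u p < u k ∧ u k < u j) with hK
  have inj1 : Function.Injective (fun k : Fin n => ((p, k) : Fin n × Fin n)) := by
    intro a b hab; simpa using hab
  have inj2 : Function.Injective (fun k : Fin n => ((k, j) : Fin n × Fin n)) := by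
    intro a b hab; simpa using hab
  have hR1card : R1.card = T1.card + T3.card := by
    have hset : R1 = T1.image (fun k => (p, k)) ∪ T3.image (fun k => (k, j)) := by
      ext x
      obtain ⟨a, b⟩ := x
      simp only [hR1, hT1, hT3, Finset.mem_filter, Finset.mem_univ, true_and,
        Finset.mem_union, Finset.mem_image, Prod.mk.injEq]
      constructor
      · rintro ⟨h1, h2, h3⟩
        rcases (swap_reversed_iff hpj a b).mp ⟨h1, h2⟩ with
          ⟨hp1, hp2, hp3⟩ | ⟨hp1, hp2, hp3⟩ | ⟨hp1, hp2⟩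
        · exact Or.inl ⟨b, ⟨hp2, hp3, by rw [hp1] at h3; exact h3⟩, hp1.symm, rfl⟩
        · exact Or.inr ⟨a, ⟨hp2, hp3, by rw [hp1] at h3; exact h3⟩, rfl, hp1.symm⟩
        · rw [hp1, hp2] at h3; exact absurd h3 (not_lt.mpr h.le)
      · rintro (⟨k, ⟨hk1, hk2, hk3⟩, rfl, rfl⟩ | ⟨k, ⟨hk1, hk2, hk3⟩, rfl, rfl⟩)
        · have := (swap_reversed_iff hpj p k).mpr (Or.inl ⟨rfl, hk1, hk2⟩)
          exact ⟨this.1, this.2, hk3⟩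
        · have := (swap_reversed_iff hpj k j).mpr (Or.inr (Or.inl ⟨rfl, hk1, hk2⟩))
          exact ⟨this.1, this.2, hk3⟩
    rw [hset, Finset.card_union_of_disjoint, Finset.card_image_of_injective _ inj1,
      Finset.card_image_of_injective _ inj2]
    simp only [Finset.disjoint_left, Finset.mem_image]
    rintro x ⟨k, hk, rfl⟩ ⟨k', hk', he⟩
    simp only [Prod.mk.injEq] at he
    rw [hT3, Finset.mem_filter] at hk'
    rw [hT1, Finset.mem_filter] at hk
    exact absurd (he.2 ▸ hk.2.2.1) (lt_irrefl j)
  have hR2card : R2.card = T2a.card + T2b.card + 1 := by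
    have hset : R2 = (T2a.image (fun k => (p, k)) ∪ T2b.image (fun k => (k, j))) ∪ {(p, j)} := by
      ext x
      obtain ⟨a, b⟩ := x
      simp only [hR2, hT2a, hT2b, Finset.mem_filter, Finset.mem_univ, true_and,
        Finset.mem_union, Finset.mem_image, Finset.mem_singleton, Prod.mk.injEq]
      constructor
      · rintro ⟨h1, h2, h3⟩
        rcases (swap_reversed_iff hpj a b).mp ⟨h1, h2⟩ with
          ⟨hp1, hp2, hp3⟩ | ⟨hp1, hp2, hp3⟩ | ⟨hp1, hp2⟩
        · exact Or.inl (Or.inl ⟨b, ⟨hp2, hp3, by rw [hp1] at h3; exact h3⟩, hp1.symm, rfl⟩)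
        · exact Or.inl (Or.inr ⟨a, ⟨hp2, hp3, by rw [hp1] at h3; exact h3⟩, rfl, hp1.symm⟩)
        · exact Or.inr ⟨hp1, hp2⟩
      · rintro ((⟨k, ⟨hk1, hk2, hk3⟩, rfl, rfl⟩ | ⟨k, ⟨hk1, hk2, hk3⟩, rfl, rfl⟩) | ⟨rfl, rfl⟩)
        · have := (swap_reversed_iff hpj p k).mpr (Or.inl ⟨rfl, hk1, hk2⟩)
          exact ⟨this.1, this.2, hk3⟩
        · have := (swap_reversed_iff hpj k j).mpr (Or.inr (Or.inl ⟨rfl, hk1, hk2⟩))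
          exact ⟨this.1, this.2, hk3⟩
        · exact ⟨hpj, ((swap_reversed_iff hpj _ _).mpr (Or.inr (Or.inr ⟨rfl, rfl⟩))).2, h⟩
    rw [hset, Finset.card_union_of_disjoint, Finset.card_union_of_disjoint,
      Finset.card_image_of_injective _ inj1, Finset.card_image_of_injective _ inj2,
      Finset.card_singleton]
    · simp only [Finset.disjoint_left, Finset.mem_image]
      rintro x ⟨k, hk, rfl⟩ ⟨k', hk', he⟩
      simp only [Prod.mk.injEq] at he
      rw [hT2b, Finset.mem_filter] at hk'
      rw [hT2a, Finset.mem_filter] at hk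
      exact absurd (he.2 ▸ hk.2.2.1) (lt_irrefl j)
    · simp only [Finset.disjoint_left, Finset.mem_union, Finset.mem_image,
        Finset.mem_singleton]
      rintro x (⟨k, hk, rfl⟩ | ⟨k, hk, rfl⟩) he
      · simp only [Prod.mk.injEq] at he
        rw [hT2a, Finset.mem_filter] at hk
        exact absurd (he.2 ▸ hk.2.2.1) (lt_irrefl j)
      · simp only [Prod.mk.injEq] at he
        rw [hT2b, Finset.mem_filter] at hk
        exact absurd (he.1 ▸ hk.2.1) (lt_irrefl p)
  have hT2acard : T2a.card = K.card + T3.card := by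
    have hs := Finset.card_filter_add_card_filter_not (s := T2a) (fun k => u k < u j)
    rw [hT2a, Finset.filter_filter, Finset.filter_filter] at hs
    have e5 : Finset.univ.filter (fun k : Fin n => (p < k ∧ k < j ∧ u p < u k) ∧ u k < u j)
        = K := by
      ext k; simp only [hK, Finset.mem_filter]; tauto
    have e6 : Finset.univ.filter (fun k : Fin n => (p < k ∧ k < j ∧ u p < u k) ∧ ¬ u k < u j)
        = T3 := by
      ext k
      simp only [hT3, Finset.mem_filter, Finset.mem_univ, true_and]
      constructor
      · rintro ⟨⟨h1, h2, h3⟩, h4⟩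
        have hne : u k ≠ u j := fun he => (ne_of_lt h2) (u.injective he)
        exact ⟨h1, h2, lt_of_le_of_ne (not_lt.mp h4) hne.symm⟩
      · rintro ⟨h1, h2, h3⟩; exact ⟨⟨h1, h2, h.trans h3⟩, not_lt.mpr h3.le⟩
    rw [e5, e6, ← hT2a] at hs
    omega
  have hT2bcard : T2b.card = K.card + T1.card := by
    have hs := Finset.card_filter_add_card_filter_not (s := T2b) (fun k => u p < u k)
    rw [hT2b, Finset.filter_filter, Finset.filter_filter] at hs
    have e5 : Finset.univ.filter (fun k : Fin n => (p < k ∧ k < j ∧ u k < u j) ∧ u p < u k)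
        = K := by
      ext k; simp only [hK, Finset.mem_filter]; tauto
    have e6 : Finset.univ.filter (fun k : Fin n => (p < k ∧ k < j ∧ u k < u j) ∧ ¬ u p < u k)
        = T1 := by
      ext k
      simp only [hT1, Finset.mem_filter, Finset.mem_univ, true_and]
      constructor
      · rintro ⟨⟨h1, h2, h3⟩, h4⟩
        have hne : u k ≠ u p := fun he => (ne_of_lt h1).symm (u.injective he)
        exact ⟨h1, h2, lt_of_le_of_ne (not_lt.mp h4) hne⟩
      · rintro ⟨h1, h2, h3⟩; exact ⟨⟨h1, h2, h3.trans h⟩, not_lt.mpr h3.le⟩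
    rw [e5, e6, ← hT2b] at hs
    omega
  rw [e1, e4] at hsplitB
  rw [e2, e3] at hsplitA
  rw [hA]
  unfold numInv
  omega

theorem stmt_3 {n : ℕ} (w : Equiv.Perm (Fin n)) (p q : Fin n)
    (hp : ∃ i j : Fin n, i < p ∧ p < j ∧ w i < w j ∧ w j < w p)
    (hpmax : ∀ t : Fin n, (∃ i j : Fin n, i < t ∧ t < j ∧ w i < w j ∧ w j < w t) → t ≤ p)
    (hq : p < q ∧ w q < w p ∧ ∃ i : Fin n, i < p ∧ w i < w q)
    (hqmax : ∀ j : Fin n, p < j → w j < w p → (∃ i : Fin n, i < p ∧ w i < w j) → j ≤ q)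
    (u : Equiv.Perm (Fin n)) (hu : u = w * Equiv.swap p q) :
    {v : Equiv.Perm (Fin n) | ∃ j : Fin n, p < j ∧
      numInv (u * Equiv.swap p j) = numInv u + 1 ∧ v = u * Equiv.swap p j} = {w} := by
  obtain ⟨hpq, hwqp, i0, hi0p, hi0q⟩ := hq
  have hswap : u * Equiv.swap p q = w := by
    rw [hu, mul_assoc, Equiv.swap_mul_self, mul_one]
  have hup : u p = w q := by
    rw [hu]; simp [Equiv.Perm.mul_apply, Equiv.swap_apply_left]
  have huq : u q = w p := by
    rw [hu]; simp [Equiv.Perm.mul_apply, Equiv.swap_apply_right]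
  ext v
  simp only [Set.mem_setOf_eq, Set.mem_singleton_iff]
  constructor
  · rintro ⟨j, hpj, hlen, rfl⟩
    have hjp : j ≠ p := (ne_of_lt hpj).symm
    rcases lt_trichotomy (u p) (u j) with hlt | heq | hgt
    · have hK := key u p j hpj hlt
      rw [hlen] at hK
      have hK0 : (Finset.univ.filter
          (fun k : Fin n => p < k ∧ k < j ∧ u p < u k ∧ u k < u j)).card = 0 := by omega
      rcases lt_trichotomy j q with hjq | rfl | hqj
      · -- p < j < q : contradicts hpmax via pattern (i0, j, q)
        have huj : u j = w j := by
          rw [hu]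
          simp [Equiv.Perm.mul_apply, Equiv.swap_apply_of_ne_of_ne hjp (ne_of_lt hjq)]
        have hwqj : w q < w j := by rw [← hup, ← huj]; exact hlt
        exact absurd (hpmax j ⟨i0, q, lt_trans hi0p hpj, hjq, hi0q, hwqj⟩)
          (not_le.mpr hpj)
      · exact hswap
      · -- q < j
        have huj : u j = w j := by
          rw [hu]
          simp [Equiv.Perm.mul_apply, Equiv.swap_apply_of_ne_of_ne hjp (ne_of_gt hqj)]
        rcases lt_trichotomy (w j) (w p) with h1 | h2 | h3
        · have hwqj : w q < w j := by rw [← hup, ← huj]; exact hlt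
          exact absurd (hqmax j hpj h1 ⟨i0, hi0p, lt_trans hi0q hwqj⟩) (not_le.mpr hqj)
        · exact absurd (w.injective h2) hjp
        · have hqmem : q ∈ Finset.univ.filter
              (fun k : Fin n => p < k ∧ k < j ∧ u p < u k ∧ u k < u j) := by
            simp only [Finset.mem_filter, Finset.mem_univ, true_and]
            refine ⟨hpq, hqj, ?_, ?_⟩
            · rw [hup, huq]; exact hwqp
            · rw [huq, huj]; exact h3
          rw [Finset.card_eq_zero] at hK0
          rw [hK0] at hqmem
          exact absurd hqmem (Finset.notMem_empty q)
    · exact absurd (u.injective heq) (ne_of_lt hpj)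
    · -- u j < u p : length would drop, contradiction
      have h1 : (u * Equiv.swap p j) p < (u * Equiv.swap p j) j := by
        simp only [Equiv.Perm.mul_apply, Equiv.swap_apply_left, Equiv.swap_apply_right]
        exact hgt
      have hK := key (u * Equiv.swap p j) p j hpj h1
      rw [mul_assoc, Equiv.swap_mul_self, mul_one, hlen] at hK
      omega
  · intro hv
    refine ⟨q, hpq, ?_, by rw [hv, ← hswap]⟩
    have hupq : u p < u q := by rw [hup, huq]; exact hwqp
    have hK := key u p q hpq hupq
    have hK0 : (Finset.univ.filter
        (fun k : Fin n => p < k ∧ k < q ∧ u p < u k ∧ u k < u q)).card = 0 := by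
      rw [Finset.card_eq_zero, Finset.filter_eq_empty_iff]
      rintro k - ⟨hpk, hkq, h3, h4⟩
      have huk : u k = w k := by
        rw [hu]
        simp [Equiv.Perm.mul_apply,
          Equiv.swap_apply_of_ne_of_ne (ne_of_gt hpk) (ne_of_lt hkq)]
      rw [hup, huk] at h3
      exact absurd (hpmax k ⟨i0, q, lt_trans hi0p hpk, hkq, hi0q, h3⟩) (not_le.mpr hpk)
    rw [hK, hK0]
end

section
/- Let w ∈ S_n contain a 132 pattern, with p the largest index t admitting i < t < j with w(i) < w(j) < w(t), and q the largest index j > p with w(j) < w(p) and ∃ i < p, w(i) < w(j). Set u = w t_{p,q}. Then the set I(u,p) = { i < p : ℓ(u t_{i,p}) = ℓ(u) + 1 } is nonempty. -/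
open Equiv Function

section
variable {α : Type*} [LinearOrder α]

lemma swap_apply_lt_swap_apply_cases {i p a b : α} (hip : i < p) (hab : a < b)
    (h : swap i p b < swap i p a) : (a = i ∧ b ≤ p) ∨ (i < a ∧ b = p) := by
  rw [swap_apply_def, swap_apply_def] at h
  split_ifs at h <;> grind

def mapPairIfOrderPreserved (σ : Perm α) (x : α × α) : α × α :=
  if (x.1 < x.2 ↔ σ x.1 < σ x.2) then (σ x.1, σ x.2) else x

lemma mapPairIfOrderPreserved_involutive {σ : Perm α} (hσ : Involutive σ) :
    Involutive (mapPairIfOrderPreserved σ) := by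
  intro x
  by_cases h : (x.1 < x.2 ↔ σ x.1 < σ x.2)
  · simp [mapPairIfOrderPreserved, h, hσ x.1, hσ x.2]
  · simp [mapPairIfOrderPreserved, h]

variable {β : Type*} [LinearOrder β]

def IsInversion (v : α → β) (x : α × α) : Prop := x.1 < x.2 ∧ v x.2 < v x.1

lemma isInversion_comp_swap_iff {v : α → β} (hv : Injective v) {i p : α} (hip : i < p)
    (hvip : v i < v p) (hgap : ∀ k, i < k → k < p → ¬(v i < v k ∧ v k < v p)) (x : α × α) :
    IsInversion (v ∘ swap i p) x ↔
      mapPairIfOrderPreserved (swap i p) x = (i, p) ∨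
        IsInversion v (mapPairIfOrderPreserved (swap i p) x) := by
  obtain ⟨a, b⟩ := x
  unfold mapPairIfOrderPreserved
  dsimp only at *
  split_ifs with hpres
  · have hne : (swap i p a, swap i p b) ≠ (i, p) := by
      intro h
      obtain ⟨rfl, rfl⟩ : a = p ∧ b = i := by simpa [swap_apply_eq_iff] using h
      simp only [swap_apply_left, swap_apply_right] at hpres
      exact hip.not_gt (hpres.mpr hip)
    simp only [IsInversion, comp_apply, hne, false_or, ← hpres]
  · simp only [IsInversion, comp_apply]
    by_cases hab : a < b
    · have hflip : swap i p b < swap i p a :=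
        lt_of_le_of_ne (not_lt.mp fun h => hpres (iff_of_true hab h))
          ((swap i p).injective.ne hab.ne')
      have hbelow (k) (h1 : i < k) (h2 : k < p) : v k < v i ↔ v k < v p :=
        ⟨fun h => h.trans hvip, fun h => (lt_or_gt_of_ne (hv.ne h1.ne')).resolve_right
          fun h' => hgap k h1 h2 ⟨h', h⟩⟩
      have habove (k) (h1 : i < k) (h2 : k < p) : v i < v k ↔ v p < v k :=
        ⟨fun h => (lt_or_gt_of_ne (hv.ne h2.ne')).resolve_right fun h' => hgap k h1 h2 ⟨h, h'⟩,
          hvip.trans⟩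
      rcases swap_apply_lt_swap_apply_cases hip hab hflip with ⟨rfl, hbp⟩ | ⟨hia, rfl⟩
      · rcases hbp.lt_or_eq with hbp | rfl
        · simp [swap_apply_of_ne_of_ne hab.ne' hbp.ne, hab, hbp.ne, hbelow b hab hbp]
        · simp [hip, hvip]
      · simp only [hab, swap_apply_right, swap_apply_of_ne_of_ne hia.ne' hab.ne, true_and,
          Prod.mk.injEq, hia.ne', and_true, false_or]
        exact habove a hia hab
    · simp only [hab, false_and, false_iff, not_or]
      exact ⟨fun h => hab (by rw [Prod.mk.injEq] at h; rwa [h.1, h.2]), not_false⟩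
end

theorem numInv_mul_swap_eq_add_one {n : ℕ} (v : Perm (Fin n)) {i p : Fin n} (hip : i < p)
    (hvip : v i < v p) (hgap : ∀ k, i < k → k < p → ¬(v i < v k ∧ v k < v p)) :
    numInv (v * swap i p) = numInv v + 1 := by
  have hσ : Involutive (swap i p) := swap_apply_self i p
  have hip_notMem :
      (i, p) ∉ Finset.univ.filter fun x : Fin n × Fin n => x.1 < x.2 ∧ v x.2 < v x.1 := by
    simp [hvip.not_gt]
  rw [numInv, numInv, ← Finset.card_insert_of_notMem hip_notMem]
  exact Finset.card_equiv (mapPairIfOrderPreserved_involutive hσ).toPerm fun x => by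
    simp only [Finset.mem_insert, Finset.mem_filter, Finset.mem_univ, true_and,
      Involutive.coe_toPerm]
    exact isInversion_comp_swap_iff v.injective hip hvip hgap x

theorem exists_lt_numInv_mul_swap_eq_add_one {n : ℕ} (u : Perm (Fin n)) {p : Fin n}
    (h : ∃ i < p, u i < u p) : ∃ i < p, numInv (u * swap i p) = numInv u + 1 := by
  obtain ⟨i₀, hi₀⟩ := h
  obtain ⟨i, hi, hmax⟩ := Finset.exists_max_image (Finset.univ.filter fun i => i < p ∧ u i < u p) u
    ⟨i₀, by simpa using hi₀⟩
  obtain ⟨hip, hup⟩ := (Finset.mem_filter.mp hi).2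
  exact ⟨i, hip, numInv_mul_swap_eq_add_one u hip hup fun k hik hkp ⟨hik', hkp'⟩ =>
    (hmax k (by simp [hkp, hkp'])).not_gt hik'⟩

theorem stmt_4_general {n : ℕ} (w : Equiv.Perm (Fin n)) (p q : Fin n)
    (hq : p < q ∧ w q < w p ∧ ∃ i : Fin n, i < p ∧ w i < w q)
    (u : Equiv.Perm (Fin n)) (hu : u = w * Equiv.swap p q) :
    ∃ i : Fin n, i < p ∧ numInv (u * Equiv.swap i p) = numInv u + 1 := by
  obtain ⟨hpq, -, i, hip, hwi⟩ := hq
  subst hu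
  have hbelow : ∀ x < p, (w * swap p q) x = w x := fun x hx => by
    simp [swap_apply_of_ne_of_ne hx.ne (hx.trans hpq).ne]
  exact exists_lt_numInv_mul_swap_eq_add_one _ ⟨i, hip, by simpa [hbelow i hip] using hwi⟩

theorem stmt_4 {n : ℕ} (w : Equiv.Perm (Fin n)) (p q : Fin n)
    (hp : ∃ i j : Fin n, i < p ∧ p < j ∧ w i < w j ∧ w j < w p)
    (hpmax : ∀ t : Fin n, (∃ i j : Fin n, i < t ∧ t < j ∧ w i < w j ∧ w j < w t) → t ≤ p)
    (hq : p < q ∧ w q < w p ∧ ∃ i : Fin n, i < p ∧ w i < w q)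
    (hqmax : ∀ j : Fin n, p < j → w j < w p → (∃ i : Fin n, i < p ∧ w i < w j) → j ≤ q)
    (u : Equiv.Perm (Fin n)) (hu : u = w * Equiv.swap p q) :
    ∃ i : Fin n, i < p ∧ numInv (u * Equiv.swap i p) = numInv u + 1 :=
  stmt_4_general w p q hq u hu
end

section
/- If w ∈ S_n is a permutation whose Lehmer code (c_1(w),...,c_n(w)) is weakly decreasing, then w is 132-avoiding. -/
/-- The Lehmer code of a permutation of `Fin n`. -/
def lehmer {n : ℕ} (w : Equiv.Perm (Fin n)) (i : Fin n) : ℕ :=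
  (Finset.univ.filter (fun j : Fin n => i < j ∧ w j < w i)).card

theorem stmt_6 {n : ℕ} (w : Equiv.Perm (Fin n))
    (hdec : ∀ i j : Fin n, i ≤ j → lehmer w j ≤ lehmer w i) :
    ¬ ∃ i p j : Fin n, i < p ∧ p < j ∧ w i < w j ∧ w j < w p := by
  intro h
  classical
  set T : Finset (Fin n) :=
    Finset.univ.filter (fun i => ∃ p j : Fin n, i < p ∧ p < j ∧ w i < w j ∧ w j < w p) with hT
  have hTne : T.Nonempty := by
    obtain ⟨i, p, j, h1, h2, h3, h4⟩ := h
    exact ⟨i, Finset.mem_filter.mpr ⟨Finset.mem_univ _, p, j, h1, h2, h3, h4⟩⟩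
  set i := T.max' hTne with hi
  have hiT : i ∈ T := T.max'_mem hTne
  obtain ⟨p, j, hip, hpj, hij, hjp⟩ := (Finset.mem_filter.mp hiT).2
  -- counting argument
  set Si := Finset.univ.filter (fun k : Fin n => i < k ∧ w k < w i) with hSi
  set Sp := Finset.univ.filter (fun k : Fin n => p < k ∧ w k < w p) with hSp
  set B := Si.filter (fun k => p < k) with hB
  have hjSp : j ∈ Sp := by simp [hSp, hpj, hjp]
  have hjB : j ∉ B := by
    simp [hB, hSi]
    intro h1 h2
    exact absurd h2 (not_lt.mpr hij.le)
  have hBsub : insert j B ⊆ Sp := by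
    intro k hk
    rcases Finset.mem_insert.mp hk with rfl | hk
    · exact hjSp
    · simp only [hB, hSi, Finset.mem_filter, Finset.mem_univ, true_and] at hk
      simp only [hSp, Finset.mem_filter, Finset.mem_univ, true_and]
      exact ⟨hk.2, lt_trans hk.1.2 (lt_trans hij hjp)⟩
  have hcard1 : B.card + 1 ≤ Sp.card := by
    have := Finset.card_le_card hBsub
    rw [Finset.card_insert_of_notMem hjB] at this
    omega
  have hcard2 : Sp.card ≤ Si.card := hdec i p hip.le
  have hsplit : (Si.filter (fun k => ¬ p < k)).card + B.card = Si.card := by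
    rw [hB, add_comm]
    exact Finset.card_filter_add_card_filter_not _
  have hA : (Si.filter (fun k => ¬ p < k)).Nonempty := by
    rw [← Finset.card_pos]
    omega
  obtain ⟨k, hk⟩ := hA
  simp only [hSi, Finset.mem_filter, Finset.mem_univ, true_and, not_lt] at hk
  obtain ⟨⟨hik, hwk⟩, hkp⟩ := hk
  have hkp' : k < p := lt_of_le_of_ne hkp (by
    rintro rfl
    exact absurd (lt_trans hwk (lt_trans hij hjp)) (lt_irrefl _))
  have hkT : k ∈ T := by
    simp only [hT, Finset.mem_filter, Finset.mem_univ, true_and]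
    exact ⟨p, j, hkp', hpj, lt_trans hwk hij, hjp⟩
  exact absurd hik (not_lt.mpr (T.le_max' k hkT))
end

section
/- Let w ∈ S_n. Say a box (i,j) of the Rothe diagram D(w) has a pivot if there exists i' < i with w(i') < j. Let w contain a 132 pattern, with p the largest index t admitting i < t < j with w(i) < w(j) < w(t), and q the largest index j > p with w(j) < w(p) and ∃ i < p, w(i) < w(j). Then (p, w(q)) is the largest box, in the lexicographic order on (row, column), among boxes of D(w) having a pivot. -/
theorem stmt_11 {n : ℕ} (w : Equiv.Perm (Fin n)) (p q : Fin n)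
    (hp : ∃ i j : Fin n, i < p ∧ p < j ∧ w i < w j ∧ w j < w p)
    (hpmax : ∀ t : Fin n, (∃ i j : Fin n, i < t ∧ t < j ∧ w i < w j ∧ w j < w t) → t ≤ p)
    (hq : p < q ∧ w q < w p ∧ ∃ i : Fin n, i < p ∧ w i < w q)
    (hqmax : ∀ j : Fin n, p < j → w j < w p → (∃ i : Fin n, i < p ∧ w i < w j) → j ≤ q) :
    -- the box (p, w q) lies in the Rothe diagram and has a pivot
    ((w q < w p ∧ p < w.symm (w q)) ∧ ∃ i' : Fin n, i' < p ∧ w i' < w q) ∧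
    -- and it is the largest such box in lexicographic (row, column) order
    (∀ i j : Fin n, (j < w i ∧ i < w.symm j) → (∃ i' : Fin n, i' < i ∧ w i' < j) →
      (i < p ∨ (i = p ∧ j ≤ w q))) := by
  obtain ⟨hpq, hwq, i₀, hi₀p, hi₀w⟩ := hq
  constructor
  · exact ⟨⟨hwq, by simpa using hpq⟩, i₀, hi₀p, hi₀w⟩
  · rintro i j ⟨hj, hi⟩ ⟨i', hi'i, hi'j⟩
    set k := w.symm j with hk
    have hwk : w k = j := w.apply_symm_apply j
    by_cases hip : i < p
    · exact Or.inl hip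
    · have hieq : i = p :=
        le_antisymm
          (hpmax i ⟨i', k, hi'i, hi, by rw [hwk]; exact hi'j, by rw [hwk]; exact hj⟩)
          (le_of_not_gt hip)
      subst hieq
      refine Or.inr ⟨rfl, ?_⟩
      by_contra hgt
      push_neg at hgt
      have hkp : i < k := hi
      have hkq : k ≤ q := hqmax k hkp (by rw [hwk]; exact hj) ⟨i', hi'i, by rw [hwk]; exact hi'j⟩
      have hkq2 : k < q := lt_of_le_of_ne hkq (fun h => ne_of_gt hgt (by rw [← hwk, h]))
      have : k ≤ i := hpmax k ⟨i₀, q, lt_trans hi₀p hkp, hkq2, hi₀w,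
        show w q < w k by rw [hwk]; exact hgt⟩
      exact absurd this (not_le_of_gt hkp)
end

section
/- Let w ∈ S_n contain a 132 pattern, with p, q defined as the largest indices of the associated 132 transition (p the largest index t admitting i < t < j with w(i) < w(j) < w(t); q the largest j > p with w(j) < w(p) and ∃ i < p, w(i) < w(j)). Let i ∈ I(w t_{p,q}, p) = { i < p : ℓ(w t_{p,q} t_{i,p}) = ℓ(w) }, and set w' = w t_{p,q} t_{i,p}. If w' also contains a 132 pattern with associated indices p', q', then (p', w'(q')) < (p, w(q)) in the lexicographic order on (row, column). -/
open Equiv Finset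

variable {n : ℕ}

def inversions (w : Perm (Fin n)) : Finset (Fin n × Fin n) :=
  univ.filter fun z => z.1 < z.2 ∧ w z.2 < w z.1

theorem numInv_eq_card_inversions (w : Perm (Fin n)) : numInv w = (inversions w).card := rfl

theorem mem_inversions {w : Perm (Fin n)} {z : Fin n × Fin n} :
    z ∈ inversions w ↔ z.1 < z.2 ∧ w z.2 < w z.1 := by
  simp [inversions]

theorem apply_lt_apply_of_not_swap_lt_swap (u : Perm (Fin n)) {a b x y : Fin n} (hab : a < b)
    (hu : u b < u a) (hxy : x < y) (hσ : ¬ swap a b x < swap a b y)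
    (h : u (swap a b y) < u (swap a b x)) : u y < u x := by
  rw [swap_apply_def, swap_apply_def] at hσ h
  split_ifs at hσ h <;> subst_vars <;> grind

theorem numInv_mul_swap_lt (u : Perm (Fin n)) {a b : Fin n} (hab : a < b) (hu : u b < u a) :
    numInv (u * swap a b) < numInv u := by
  set σ := swap a b
  have hσσ (x : Fin n) : σ (σ x) = x := swap_apply_self a b x
  -- An inversion of `u * σ` whose order `σ` reverses has `x = a < y < b` or `a < x < y = b`,
  -- and is then already an inversion of `u`.
  let f : Fin n × Fin n → Fin n × Fin n := fun z =>
    if σ z.1 < σ z.2 then (σ z.1, σ z.2) else z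
  rw [numInv_eq_card_inversions, numInv_eq_card_inversions]
  calc (inversions (u * σ)).card ≤ ((inversions u).erase (a, b)).card := by
        refine card_le_card_of_injOn f (fun ⟨x, y⟩ hz => ?_)
          (fun ⟨x, y⟩ hz ⟨x', y'⟩ hz' he => ?_)
        · rw [mem_coe, mem_inversions, Perm.mul_apply, Perm.mul_apply] at hz
          rw [mem_coe, mem_erase, mem_inversions]
          simp only [f]
          split_ifs with h
          · refine ⟨fun he => ?_, h, hz.2⟩
            simp only [Prod.mk.injEq] at he
            grind
          · refine ⟨fun he => ?_, hz.1,
              apply_lt_apply_of_not_swap_lt_swap u hab hu hz.1 h hz.2⟩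
            obtain ⟨rfl, rfl⟩ := Prod.mk.inj he
            exact hu.not_gt (by simpa [σ] using hz.2)
        · rw [mem_coe, mem_inversions] at hz hz'
          simp only [f] at he
          split_ifs at he <;> simp only [Prod.mk.injEq] at he <;> grind
    _ < (inversions u).card := card_erase_lt_of_mem (mem_inversions.mpr ⟨hab, hu⟩)

section Transition

variable {w : Perm (Fin n)} {i p q : Fin n}

theorem apply_lt_of_numInv_mul_swap_mul_swap_eq (hip : i < p) (hpq : p < q) (hqp : w q < w p)
    (h : numInv (w * swap p q * swap i p) = numInv w) : w i < w q := by
  refine (lt_or_gt_of_ne (w.injective.ne (hip.trans hpq).ne)).resolve_right fun hqi => ?_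
  refine (numInv_mul_swap_lt w hpq hqp).not_ge (h ▸ (numInv_mul_swap_lt _ hip ?_).le)
  simpa [swap_apply_of_ne_of_ne hip.ne (hip.trans hpq).ne] using hqi

variable (w)

theorem mul_swap_mul_swap_apply_of_ne {x : Fin n} (hi : x ≠ i) (hp : x ≠ p) (hq : x ≠ q) :
    (w * swap p q * swap i p) x = w x := by
  simp [swap_apply_of_ne_of_ne, *]

theorem mul_swap_mul_swap_apply_left : (w * swap p q * swap i p) i = w q := by
  simp

theorem mul_swap_mul_swap_apply_middle (hip : i ≠ p) (hiq : i ≠ q) :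
    (w * swap p q * swap i p) p = w i := by
  simp [swap_apply_of_ne_of_ne hip hiq]

theorem mul_swap_mul_swap_apply_right (hqi : q ≠ i) (hqp : q ≠ p) :
    (w * swap p q * swap i p) q = w p := by
  simp [swap_apply_of_ne_of_ne hqi hqp]

end Transition

def IsCenter132 (w : Perm (Fin n)) (t : Fin n) : Prop :=
  ∃ a b : Fin n, a < t ∧ t < b ∧ w a < w b ∧ w b < w t

section Pattern132

variable {w : Perm (Fin n)} {i p q : Fin n}

theorem apply_lt_apply_of_lt_of_lt (hpmax : ∀ t, IsCenter132 w t → t ≤ p)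
    (hq : ∃ a < p, w a < w q) {k : Fin n} (hpk : p < k) (hkq : k < q) : w k < w q := by
  obtain ⟨a, hap, haq⟩ := hq
  refine (lt_or_gt_of_ne (w.injective.ne hkq.ne)).resolve_right fun hqk => ?_
  exact (hpmax k ⟨a, q, hap.trans hpk, hkq, haq, hqk⟩).not_gt hpk

theorem apply_lt_apply_of_le_of_lt (hpmax : ∀ t, IsCenter132 w t → t ≤ p)
    (hqmax : ∀ b, p < b → w b < w p → (∃ a < p, w a < w b) → b ≤ q)
    (hq : p < q ∧ w q < w p ∧ ∃ a < p, w a < w q) {b : Fin n} (hqb : q < b) (hbp : w b < w p)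
    {x : Fin n} (hxq : x ≤ q) : w b < w x := by
  obtain ⟨hpq, -, a, hap, haq⟩ := hq
  have hbx_of_lt_p : ∀ x < p, w b < w x := fun x hxp =>
    (lt_or_gt_of_ne (w.injective.ne (hxp.trans (hpq.trans hqb)).ne')).resolve_right
      fun hxb => (hqmax b (hpq.trans hqb) hbp ⟨x, hxp, hxb⟩).not_gt hqb
  have hbq : w b < w q := (hbx_of_lt_p a hap).trans haq
  rcases lt_trichotomy x p with hxp | rfl | hpx
  · exact hbx_of_lt_p x hxp
  · exact hbp
  rcases hxq.lt_or_eq with hxq | rfl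
  · refine (lt_or_gt_of_ne (w.injective.ne (hxq.trans hqb).ne')).resolve_right fun hxb => ?_
    exact (hpmax q ⟨x, b, hxq, hqb, hxb, hbq⟩).not_gt hpq
  · exact hbq

theorem exists_le_apply_le_mul_swap_mul_swap (hip : i < p) (hpq : p < q) (hiq : w i < w q)
    (a : Fin n) : ∃ c ≤ a, w c ≤ (w * swap p q * swap i p) a := by
  obtain rfl | hai := eq_or_ne a i
  · exact ⟨a, le_rfl, (mul_swap_mul_swap_apply_left w).trans_ge hiq.le⟩
  obtain rfl | hap := eq_or_ne a p
  · exact ⟨i, hip.le, (mul_swap_mul_swap_apply_middle w hip.ne (hip.trans hpq).ne).ge⟩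
  obtain rfl | haq := eq_or_ne a q
  · exact ⟨p, hpq.le, (mul_swap_mul_swap_apply_right w (hip.trans hpq).ne' hpq.ne').ge⟩
  exact ⟨a, le_rfl, (mul_swap_mul_swap_apply_of_ne w hai hap haq).ge⟩

theorem not_isCenter132_mul_swap_mul_swap (hpmax : ∀ t, IsCenter132 w t → t ≤ p)
    (hqmax : ∀ b, p < b → w b < w p → (∃ a < p, w a < w b) → b ≤ q)
    (hq : p < q ∧ w q < w p ∧ ∃ a < p, w a < w q) (hip : i < p) (hiq : w i < w q)
    {t : Fin n} (hpt : p < t) : ¬ IsCenter132 (w * swap p q * swap i p) t := by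
  rintro ⟨a, b, hat, htb, hab, hbt⟩
  obtain ⟨c, hca, hc⟩ := exists_le_apply_le_mul_swap_mul_swap hip hq.1 hiq a
  have hib : b ≠ i := (hip.trans (hpt.trans htb)).ne'
  have hpb : b ≠ p := (hpt.trans htb).ne'
  rcases eq_or_ne t q with rfl | htq
  · rw [mul_swap_mul_swap_apply_of_ne w hib hpb htb.ne'] at hab hbt
    rw [mul_swap_mul_swap_apply_right w (hip.trans hpt).ne' hpt.ne'] at hbt
    exact (apply_lt_apply_of_le_of_lt hpmax hqmax hq htb hbt (hca.trans hat.le)).not_ge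
      (hc.trans hab.le)
  rw [mul_swap_mul_swap_apply_of_ne w (hip.trans hpt).ne' hpt.ne' htq] at hbt
  rcases eq_or_ne b q with rfl | hbq
  · rw [mul_swap_mul_swap_apply_right w hib hpb] at hbt
    exact hbt.asymm ((apply_lt_apply_of_lt_of_lt hpmax hq.2.2 hpt htb).trans hq.2.1)
  · rw [mul_swap_mul_swap_apply_of_ne w hib hpb hbq] at hab hbt
    exact (hpmax t ⟨c, b, hca.trans_lt hat, htb, hc.trans_lt hab, hbt⟩).not_gt hpt

end Pattern132

theorem stmt_12_general {n : ℕ} (w : Equiv.Perm (Fin n)) (p q i : Fin n)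
    (hpmax : ∀ t : Fin n, (∃ a b : Fin n, a < t ∧ t < b ∧ w a < w b ∧ w b < w t) → t ≤ p)
    (hq : p < q ∧ w q < w p ∧ ∃ a : Fin n, a < p ∧ w a < w q)
    (hqmax : ∀ b : Fin n, p < b → w b < w p → (∃ a : Fin n, a < p ∧ w a < w b) → b ≤ q)
    (hi : i < p) (hiI : numInv (w * Equiv.swap p q * Equiv.swap i p) = numInv w)
    (w' : Equiv.Perm (Fin n)) (hw' : w' = w * Equiv.swap p q * Equiv.swap i p)
    (p' q' : Fin n)
    (hp' : ∃ a b : Fin n, a < p' ∧ p' < b ∧ w' a < w' b ∧ w' b < w' p')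
    (hq' : p' < q' ∧ w' q' < w' p' ∧ ∃ a : Fin n, a < p' ∧ w' a < w' q') :
    p' < p ∨ (p' = p ∧ w' q' < w q) := by
  subst hw'
  have hiq : w i < w q := apply_lt_of_numInv_mul_swap_mul_swap_eq hi hq.1 hq.2.1 hiI
  have hp'p : p' ≤ p := not_lt.mp fun hpp' =>
    not_isCenter132_mul_swap_mul_swap hpmax hqmax hq hi hiq hpp' hp'
  rcases hp'p.lt_or_eq with hlt | rfl
  · exact Or.inl hlt
  · refine Or.inr ⟨rfl, ?_⟩
    calc _ < (w * swap p' q * swap i p') p' := hq'.2.1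
      _ = w i := mul_swap_mul_swap_apply_middle w hi.ne (hi.trans hq.1).ne
      _ < w q := hiq

theorem stmt_12 {n : ℕ} (w : Equiv.Perm (Fin n)) (p q i : Fin n)
    (hp : ∃ a b : Fin n, a < p ∧ p < b ∧ w a < w b ∧ w b < w p)
    (hpmax : ∀ t : Fin n, (∃ a b : Fin n, a < t ∧ t < b ∧ w a < w b ∧ w b < w t) → t ≤ p)
    (hq : p < q ∧ w q < w p ∧ ∃ a : Fin n, a < p ∧ w a < w q)
    (hqmax : ∀ b : Fin n, p < b → w b < w p → (∃ a : Fin n, a < p ∧ w a < w b) → b ≤ q)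
    (hi : i < p) (hiI : numInv (w * Equiv.swap p q * Equiv.swap i p) = numInv w)
    (w' : Equiv.Perm (Fin n)) (hw' : w' = w * Equiv.swap p q * Equiv.swap i p)
    (p' q' : Fin n)
    (hp' : ∃ a b : Fin n, a < p' ∧ p' < b ∧ w' a < w' b ∧ w' b < w' p')
    (hp'max : ∀ t : Fin n, (∃ a b : Fin n, a < t ∧ t < b ∧ w' a < w' b ∧ w' b < w' t) → t ≤ p')
    (hq' : p' < q' ∧ w' q' < w' p' ∧ ∃ a : Fin n, a < p' ∧ w' a < w' q')
    (hq'max : ∀ b : Fin n, p' < b → w' b < w' p' → (∃ a : Fin n, a < p' ∧ w' a < w' b) → b ≤ q') :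
    p' < p ∨ (p' = p ∧ w' q' < w q) :=
  stmt_12_general w p q i hpmax hq hqmax hi hiI w' hw' p' q' hp' hq'
end

section
/- Define a partial order on nonnegative integer sequences of length n by c ≥ c' iff for all 1 ≤ i ≤ n, c_1 + ... + c_i ≥ c'_1 + ... + c'_i. Let w ∈ S_n contain a 132 pattern with associated indices p, q, and let w' = w t_{p,q} t_{i,p} for some i ∈ I(w t_{p,q}, p) = { i < p : ℓ(w t_{p,q} t_{i,p}) = ℓ(w) }. Then the Lehmer code of w' is strictly greater than the Lehmer code of w in this order. -/
lemma numInv_eq_sum_lehmer {n : ℕ} (u : Equiv.Perm (Fin n)) :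
    numInv u = ∑ j, lehmer u j := by
  simp only [numInv, lehmer, Finset.card_filter]
  rw [Fintype.sum_prod_type]

lemma lehmer_cast {n : ℕ} (u : Equiv.Perm (Fin n)) (j : Fin n) :
    (lehmer u j : ℤ) = ∑ k, (if j < k ∧ u k < u j then (1:ℤ) else 0) := by
  rw [lehmer, Finset.card_filter]
  push_cast
  rfl

lemma sum_split2 {n : ℕ} {M : Type*} [AddCommMonoid M] (a b : Fin n) (hab : a ≠ b)
    (f : Fin n → M) :
    ∑ k, f k = f a + f b + ∑ k ∈ (Finset.univ.erase a).erase b, f k := by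
  rw [← Finset.add_sum_erase _ f (Finset.mem_univ a),
    ← Finset.add_sum_erase _ f (Finset.mem_erase.mpr ⟨hab.symm, Finset.mem_univ b⟩),
    add_assoc]

theorem stmt_14 {n : ℕ} (w : Equiv.Perm (Fin n)) (p q i : Fin n)
    (hp : ∃ a b : Fin n, a < p ∧ p < b ∧ w a < w b ∧ w b < w p)
    (hpmax : ∀ t : Fin n, (∃ a b : Fin n, a < t ∧ t < b ∧ w a < w b ∧ w b < w t) → t ≤ p)
    (hq : p < q ∧ w q < w p ∧ ∃ a : Fin n, a < p ∧ w a < w q)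
    (hqmax : ∀ b : Fin n, p < b → w b < w p → (∃ a : Fin n, a < p ∧ w a < w b) → b ≤ q)
    (hi : i < p) (hiI : numInv (w * Equiv.swap p q * Equiv.swap i p) = numInv w)
    (w' : Equiv.Perm (Fin n)) (hw' : w' = w * Equiv.swap p q * Equiv.swap i p) :
    (∀ k : Fin n,
      ∑ j ∈ Finset.univ.filter (fun j : Fin n => j ≤ k), lehmer w j ≤
        ∑ j ∈ Finset.univ.filter (fun j : Fin n => j ≤ k), lehmer w' j) ∧
    lehmer w ≠ lehmer w' := by
  obtain ⟨hpq, hwqp, a, hap, haq⟩ := hq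
  have hiq : i < q := hi.trans hpq
  have winj := w.injective
  -- values of w'
  have hvi : w' i = w q := by
    rw [hw']; simp [Equiv.swap_apply_of_ne_of_ne, hi.ne, hiq.ne, Equiv.Perm.mul_apply]
  have hvp : w' p = w i := by
    rw [hw']; simp [Equiv.swap_apply_of_ne_of_ne, hi.ne, hiq.ne, Equiv.Perm.mul_apply]
  have hvq : w' q = w p := by
    rw [hw']; simp [Equiv.swap_apply_of_ne_of_ne, hiq.ne', hpq.ne', Equiv.Perm.mul_apply]
  have hvo : ∀ k, k ≠ i → k ≠ p → k ≠ q → w' k = w k := by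
    intro k h1 h2 h3
    rw [hw']; simp [Equiv.swap_apply_of_ne_of_ne, h1, h2, h3, Equiv.Perm.mul_apply]
  -- no value strictly between w q and w p occurs after p (other than at q)
  have F3 : ∀ k, p < k → k ≠ q → ¬(w q < w k ∧ w k < w p) := by
    intro k hpk hkq ⟨h1, h2⟩
    rcases hkq.lt_or_gt with hlt | hgt
    · exact absurd (hpmax k ⟨a, q, hap.trans hpk, hlt, haq, h1⟩) (not_le.mpr hpk)
    · exact absurd (hqmax k hpk h2 ⟨a, hap, haq.trans h1⟩) (not_le.mpr hgt)
  have F3iff : ∀ k, p < k → k ≠ q → (w k < w q ↔ w k < w p) := by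
    intro k hpk hkq
    constructor
    · exact fun h => h.trans hwqp
    · intro h
      by_contra h'
      exact F3 k hpk hkq ⟨lt_of_le_of_ne (not_lt.mp h') (winj.ne (Ne.symm hkq)), h⟩
  have F3iff' : ∀ k, p < k → k ≠ q → (w q < w k ↔ w p < w k) := by
    intro k hpk hkq
    constructor
    · intro h
      by_contra h'
      exact F3 k hpk hkq ⟨h, lt_of_le_of_ne (not_lt.mp h') (winj.ne hpk.ne')⟩
    · exact fun h => hwqp.trans h
  -- the correction term
  set e : Fin n → ℤ := fun k =>
    if i < k ∧ k < p then
      ((if w i < w k then (1:ℤ) else 0) - (if w q < w k then 1 else 0)) else 0 with he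
  have hei : e i = 0 := by simp [he]
  have hep : e p = 0 := by simp [he]
  -- the permutation tau with w' = w ∘ tau
  set τ : Equiv.Perm (Fin n) := (Equiv.swap i p).trans (Equiv.swap p q) with hτ
  have hwτ : ∀ k, w' k = w (τ k) := by intro k; rw [hw']; rfl
  have hτi : τ i = q := by
    simp [hτ, Equiv.swap_apply_of_ne_of_ne, hi.ne, hiq.ne]
  have hτp : τ p = i := by
    simp [hτ, Equiv.swap_apply_of_ne_of_ne, hi.ne, hiq.ne]
  have hτq : τ q = p := by
    simp [hτ, Equiv.swap_apply_of_ne_of_ne, hiq.ne', hpq.ne']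
  have hτo : ∀ k, k ≠ i → k ≠ p → k ≠ q → τ k = k := by
    intro k h1 h2 h3
    simp [hτ, Equiv.swap_apply_of_ne_of_ne, h1, h2, h3]
  -- Lemma E
  have lemE : ∀ j, j ≠ i → j ≠ p → (lehmer w' j : ℤ) = (lehmer w j : ℤ) + e j := by
    intro j hji hjp
    by_cases h1 : j < i
    · -- bijection case
      have hτgt : ∀ k, j < k → j < τ k := by
        intro k hjk
        by_cases e1 : k = i
        · rw [e1, hτi]; exact h1.trans hiq
        by_cases e2 : k = p
        · rw [e2, hτp]; exact h1
        by_cases e3 : k = q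
        · rw [e3, hτq]; exact h1.trans hi
        rw [hτo k e1 e2 e3]; exact hjk
      have hsgt : ∀ m, j < m → j < τ.symm m := by
        intro m hjm
        by_cases e1 : m = q
        · rw [e1, ← hτi, Equiv.symm_apply_apply]; exact h1
        by_cases e2 : m = i
        · rw [e2, ← hτp, Equiv.symm_apply_apply]; exact h1.trans hi
        by_cases e3 : m = p
        · rw [e3, ← hτq, Equiv.symm_apply_apply]; exact h1.trans hiq
        have : τ.symm m = m := by
          conv_lhs => rw [← hτo m e2 e3 e1]
          exact Equiv.symm_apply_apply τ m
        rw [this]; exact hjm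
      have hj' : w' j = w j :=
        hvo j hji hjp (ne_of_lt (h1.trans hiq))
      have hcard : lehmer w' j = lehmer w j := by
        rw [lehmer, lehmer]
        refine Finset.card_bij' (fun k _ => τ k) (fun m _ => τ.symm m) ?_ ?_
          (fun k _ => τ.symm_apply_apply k) (fun m _ => τ.apply_symm_apply m)
        · intro k hk
          rw [Finset.mem_filter] at hk ⊢
          obtain ⟨-, hjk, hwk⟩ := hk
          rw [hwτ, hj'] at hwk
          exact ⟨Finset.mem_univ _, hτgt k hjk, hwk⟩
        · intro m hm
          rw [Finset.mem_filter] at hm ⊢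
          obtain ⟨-, hjm, hwm⟩ := hm
          refine ⟨Finset.mem_univ _, hsgt m hjm, ?_⟩
          rw [hwτ, hj', Equiv.apply_symm_apply]
          exact hwm
      rw [hcard]
      have : ¬ (i < j ∧ j < p) := fun h => (asymm h1) h.1
      simp [he, this]
    · have hij : i < j := lt_of_le_of_ne (not_lt.mp h1) (Ne.symm hji)
      by_cases h2 : j < p
      · -- the interesting middle case
        have hjq : j ≠ q := ne_of_lt (h2.trans hpq)
        have hj' : w' j = w j := hvo j hji hjp hjq
        rw [lehmer_cast, lehmer_cast]
        simp only [hj']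
        rw [sum_split2 p q hpq.ne, sum_split2 p q hpq.ne]
        have hDD : ∀ k ∈ (Finset.univ.erase p).erase q,
            (if j < k ∧ w' k < w j then (1:ℤ) else 0)
              = (if j < k ∧ w k < w j then 1 else 0) := by
          intro k hk
          rw [Finset.mem_erase, Finset.mem_erase] at hk
          obtain ⟨hkq, hkp, -⟩ := hk
          by_cases hki : k = i
          · subst hki
            simp [asymm hij]
          · rw [hvo k hki hkp hkq]
        rw [Finset.sum_congr rfl hDD]
        simp only [hvp, hvq, he]
        have h3 : j < q := h2.trans hpq
        simp only [h2, h3, hij, true_and, and_self, if_true]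
        ring
      · have hpj : p < j := lt_of_le_of_ne (not_lt.mp h2) (Ne.symm hjp)
        by_cases h3 : j = q
        · -- j = q
          rw [h3]
          have hcard : lehmer w' q = lehmer w q := by
            rw [lehmer, lehmer]
            congr 1
            apply Finset.filter_congr
            intro k _
            by_cases hqk : q < k
            · have hpk : p < k := hpq.trans hqk
              have hkq : k ≠ q := ne_of_gt hqk
              rw [hvq, hvo k (ne_of_gt (hiq.trans hqk)) (ne_of_gt hpk) hkq]
              simp only [hqk, true_and]
              exact (F3iff k hpk hkq).symm
            · simp [hqk]
          rw [hcard]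
          have : ¬ (i < q ∧ q < p) := fun h => (asymm hpq) h.2
          simp [he, this]
        · -- p < j, j ≠ q
          have hj' : w' j = w j := hvo j hji hjp h3
          have hcard : lehmer w' j = lehmer w j := by
            rw [lehmer, lehmer]
            congr 1
            apply Finset.filter_congr
            intro k _
            by_cases hjk : j < k
            · simp only [hjk, true_and, hj']
              by_cases hkq : k = q
              · subst hkq
                rw [hvq]
                exact (F3iff' j hpj h3).symm
              · rw [hvo k (ne_of_gt (hi.trans (hpj.trans hjk)))
                  (ne_of_gt (hpj.trans hjk)) hkq]
            · simp [hjk]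
          rw [hcard]
          have : ¬ (i < j ∧ j < p) := fun h => (asymm hpj) h.2
          simp [he, this]
  -- Claim C : the combined change at positions i and p
  have claimC : (lehmer w' i : ℤ) + lehmer w' p
      = (lehmer w i : ℤ) + lehmer w p
        + ((if w i < w q then (1:ℤ) else 0) - (if w q < w i then 1 else 0) - 1)
        + ∑ k, e k := by
    have hAB : ∀ k ∈ (Finset.univ.erase p).erase q,
        ((if i < k ∧ w' k < w q then (1:ℤ) else 0)
          + (if p < k ∧ w' k < w i then 1 else 0))
        = ((if i < k ∧ w k < w i then (1:ℤ) else 0)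
          + (if p < k ∧ w k < w p then 1 else 0) + e k) := by
      intro k hk
      rw [Finset.mem_erase, Finset.mem_erase] at hk
      obtain ⟨hkq, hkp, -⟩ := hk
      by_cases hki : k = i
      · subst hki
        have h1 : ¬ p < k := asymm hi
        simp [lt_irrefl, h1, he]
      · rw [hvo k hki hkp hkq]
        by_cases hik : i < k
        · by_cases hpk : p < k
          · have h3 := F3iff k hpk hkq
            have h4 : ¬ k < p := asymm hpk
            simp only [he, hik, hpk, true_and, h4, and_false, if_false, h3]
            ring
          · have hkp' : k < p := lt_of_le_of_ne (not_lt.mp hpk) hkp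
            have hne1 : w k ≠ w i := winj.ne hki
            have hne2 : w k ≠ w q := winj.ne hkq
            simp only [he, hik, hkp', hpk, true_and, and_true, false_and, if_false]
            rcases hne1.lt_or_gt with ha1 | ha1 <;> rcases hne2.lt_or_gt with ha2 | ha2 <;>
              simp [ha1, ha2, asymm ha1, asymm ha2]
        · have hpk : ¬ p < k := fun h => hik (hi.trans h)
          have hg : ¬ (i < k ∧ k < p) := fun h => hik h.1
          simp [hik, hpk, he, hg]
    have h1 : (∑ k, ((if i < k ∧ w' k < w q then (1:ℤ) else 0)
          + (if p < k ∧ w' k < w i then 1 else 0)))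
        = (∑ k, ((if i < k ∧ w k < w i then (1:ℤ) else 0)
          + (if p < k ∧ w k < w p then 1 else 0) + e k))
          + ((if w i < w q then (1:ℤ) else 0) - (if w q < w i then 1 else 0) - 1) := by
      rw [sum_split2 p q hpq.ne, sum_split2 p q hpq.ne
        (f := fun k => (if i < k ∧ w k < w i then (1:ℤ) else 0)
          + (if p < k ∧ w k < w p then 1 else 0) + e k)]
      rw [Finset.sum_congr rfl hAB]
      have hg1 : ¬ (i < p ∧ p < p) := fun h => lt_irrefl p h.2
      have hg2 : ¬ (i < q ∧ q < p) := fun h => (asymm hpq) h.2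
      have hg3 : ¬ w p < w q := asymm hwqp
      have hg4 : ¬ q < p := asymm hpq
      simp only [hvp, hvq, he, hi, hpq, hiq, lt_irrefl, true_and, false_and, and_false,
        if_false, hg1, hg2, if_true, hg3, hwqp, hg4]
      ring
    calc (lehmer w' i : ℤ) + lehmer w' p
        = ∑ k, ((if i < k ∧ w' k < w q then (1:ℤ) else 0)
            + (if p < k ∧ w' k < w i then 1 else 0)) := by
          rw [Finset.sum_add_distrib, lehmer_cast w' i, lehmer_cast w' p, hvi, hvp]
      _ = (∑ k, ((if i < k ∧ w k < w i then (1:ℤ) else 0)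
            + (if p < k ∧ w k < w p then 1 else 0) + e k))
            + ((if w i < w q then (1:ℤ) else 0) - (if w q < w i then 1 else 0) - 1) := h1
      _ = (lehmer w i : ℤ) + lehmer w p
            + ((if w i < w q then (1:ℤ) else 0) - (if w q < w i then 1 else 0) - 1)
            + ∑ k, e k := by
          rw [Finset.sum_add_distrib, Finset.sum_add_distrib,
            lehmer_cast w i, lehmer_cast w p]
          ring
  -- the total sums agree
  have hsumZ : (∑ j, (lehmer w' j : ℤ)) = ∑ j, (lehmer w j : ℤ) := by
    have h2 : numInv w' = numInv w := by rw [hw']; exact hiI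
    rw [numInv_eq_sum_lehmer, numInv_eq_sum_lehmer] at h2
    exact_mod_cast h2
  -- master scalar equation
  have master : ((if w i < w q then (1:ℤ) else 0) - (if w q < w i then 1 else 0) - 1)
      + 2 * ∑ k, e k = 0 := by
    have hA := sum_split2 i p hi.ne (fun j => (lehmer w' j : ℤ))
    have hB := sum_split2 i p hi.ne (fun j => (lehmer w j : ℤ))
    have hE := sum_split2 i p hi.ne e
    rw [hei, hep] at hE
    have hD : ∑ j ∈ (Finset.univ.erase i).erase p, (lehmer w' j : ℤ)
        = ∑ j ∈ (Finset.univ.erase i).erase p, ((lehmer w j : ℤ) + e j) := by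
      refine Finset.sum_congr rfl fun j hj => ?_
      rw [Finset.mem_erase, Finset.mem_erase] at hj
      exact lemE j hj.2.1 hj.1
    rw [Finset.sum_add_distrib] at hD
    linarith [hsumZ, hA, hB, claimC, hD, hE]
  -- deduce F1 and F2
  have hF12 : w i < w q ∧ ∀ k, e k = 0 := by
    by_cases hc : w i < w q
    · refine ⟨hc, ?_⟩
      have hnn : ∀ k ∈ Finset.univ, 0 ≤ e k := by
        intro k _
        simp only [he]
        by_cases hg : i < k ∧ k < p
        · by_cases h2 : w q < w k
          · simp [hg, h2, hc.trans h2]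
          · by_cases h3 : w i < w k <;> simp [hg, h2, h3]
        · simp [hg]
      have hz : ∑ k, e k = 0 := by
        rw [if_pos hc, if_neg (asymm hc)] at master
        linarith
      intro k
      exact (Finset.sum_eq_zero_iff_of_nonneg hnn).mp hz k (Finset.mem_univ k)
    · exfalso
      have hqi : w q < w i := lt_of_le_of_ne (not_lt.mp hc) (winj.ne hiq.ne')
      have hnp : ∀ k ∈ Finset.univ, e k ≤ 0 := by
        intro k _
        simp only [he]
        by_cases hg : i < k ∧ k < p
        · by_cases h2 : w i < w k
          · simp [hg, h2, hqi.trans h2]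
          · by_cases h3 : w q < w k <;> simp [hg, h2, h3]
        · simp [hg]
      have hsn : ∑ k, e k ≤ 0 := Finset.sum_nonpos hnp
      rw [if_neg hc, if_pos hqi] at master
      linarith
  obtain ⟨hF1, hF2⟩ := hF12
  -- strict increase at position i
  have hlt : lehmer w i < lehmer w' i := by
    rw [lehmer, lehmer]
    apply Finset.card_lt_card
    have hsub : Finset.univ.filter (fun k : Fin n => i < k ∧ w k < w i)
        ⊆ Finset.univ.filter (fun k : Fin n => i < k ∧ w' k < w' i) := by
      intro k hk
      rw [Finset.mem_filter] at hk ⊢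
      obtain ⟨-, hik, hki⟩ := hk
      have hkp : k ≠ p := by
        rintro rfl
        exact absurd hki (asymm (hF1.trans hwqp))
      have hkq : k ≠ q := by
        rintro rfl
        exact absurd hki (asymm hF1)
      exact ⟨Finset.mem_univ _, hik,
        by rw [hvo k (ne_of_gt hik) hkp hkq, hvi]; exact hki.trans hF1⟩
    refine (Finset.ssubset_iff_of_subset hsub).mpr ⟨p, ?_, ?_⟩
    · rw [Finset.mem_filter]
      exact ⟨Finset.mem_univ _, hi, by rw [hvp, hvi]; exact hF1⟩
    · rw [Finset.mem_filter]
      push_neg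
      intro _ _
      exact (hF1.trans hwqp).le
  -- coordinatewise equality away from i, p
  have hE0 : ∀ j, j ≠ i → j ≠ p → lehmer w' j = lehmer w j := by
    intro j h1 h2
    have h3 := lemE j h1 h2
    rw [hF2 j, add_zero] at h3
    exact_mod_cast h3
  constructor
  · intro k
    by_cases hpk : p ≤ k
    · -- total prefix: equality
      have htot : ∑ j, lehmer w j = ∑ j, lehmer w' j := by
        rw [← numInv_eq_sum_lehmer, ← numInv_eq_sum_lehmer, hw']
        exact hiI.symm
      have hcomp : ∑ j ∈ Finset.univ.filter (fun j : Fin n => ¬ j ≤ k), lehmer w j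
          = ∑ j ∈ Finset.univ.filter (fun j : Fin n => ¬ j ≤ k), lehmer w' j := by
        refine Finset.sum_congr rfl fun j hj => ?_
        rw [Finset.mem_filter] at hj
        have hkj : k < j := not_le.mp hj.2
        have hpj : p < j := lt_of_le_of_lt hpk hkj
        exact (hE0 j (ne_of_gt (hi.trans hpj)) (ne_of_gt hpj)).symm
      have e1 := Finset.sum_filter_add_sum_filter_not Finset.univ
        (fun j : Fin n => j ≤ k) (lehmer w)
      have e2 := Finset.sum_filter_add_sum_filter_not Finset.univ
        (fun j : Fin n => j ≤ k) (lehmer w')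
      omega
    · apply Finset.sum_le_sum
      intro j hj
      rw [Finset.mem_filter] at hj
      have hjp : j ≠ p := by
        rintro rfl
        exact hpk hj.2
      by_cases hji : j = i
      · subst hji
        exact le_of_lt hlt
      · exact le_of_eq (hE0 j hji hjp).symm
  · intro hfun
    have := congrFun hfun i
    omega
end
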